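/- arXiv:1205.6603 — 4 statements merged into one kernel-verified Lean document; each statement's English description precedes it below -/
import Mathlib

section
/- Let f : ℝ³ → [0,∞) be measurable, not almost everywhere zero, with ∫_{ℝ³} (1+|q|) f(q) dq < ∞. Then (∫_{ℝ³} f(q) dq/q⁰)² + Σ_{i=1}^{3} (∫_{ℝ³} qⁱ f(q) dq/q⁰)² < (∫_{ℝ³} f(q) dq)². In particular, the proper particle density n_f := √( (∫ f dq)² − Σ_{i=1}^{3} (∫ qⁱ f dq/q⁰)² ) is a well-defined strictly positive real number, and the quantity α_f := (1/n_f) ∫_{ℝ³} f(q) dq/q⁰ satisfies 0 < α_f < 1. -/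
/-!
Put `v(q) = (1, q)/q⁰ ∈ ℝ⁴`; it is a unit vector for the Euclidean norm because
`(q⁰)² = 1 + |q|²`. The left-hand side of the inequality is `‖∫ f v‖²`, while `∫ f = ∫ f ‖v‖`.
Since `ℝ⁴` is strictly convex, the triangle inequality `‖∫ f v‖ ≤ ∫ f ‖v‖` can only be an
equality if `v` is constant on the support of `f` up to a null set; but `v` is injective, so each
of its level sets is a single point, and `f` would vanish almost everywhere.
-/

open MeasureTheory Real
open scoped InnerProductSpace

noncomputable section

/-- Momentum space `ℝ³`. -/
abbrev E3 := EuclideanSpace ℝ (Fin 3)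

/-- `q⁰ = √(1+|q|²)`. -/
def q0 (q : E3) : ℝ := Real.sqrt (1 + ‖q‖ ^ 2)

/-- Modified Bessel function `K_j(β) = ∫₀^∞ cosh(j r) exp(−β cosh r) dr`. -/
def Kb (j : ℕ) (β : ℝ) : ℝ :=
  ∫ r in Set.Ioi (0 : ℝ), Real.cosh (j * r) * Real.exp (-β * Real.cosh r)

end

open Set

section StrictTriangle

variable {α E : Type*} [MeasurableSpace α] {μ : Measure α}
  [NormedAddCommGroup E] [NormedSpace ℝ E] [CompleteSpace E] [StrictConvexSpace ℝ E]

theorem integral_pos_of_nonneg_of_not_ae_eq_zero {f : α → ℝ} (hf0 : 0 ≤ f)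
    (hf : Integrable f μ) (hne : ¬ f =ᵐ[μ] 0) : 0 < ∫ x, f x ∂μ :=
  (integral_nonneg hf0).lt_of_ne fun h => hne ((integral_eq_zero_iff_of_nonneg hf0 hf).1 h.symm)

/-- `∫ f • v ∂μ` is the integral of `v` for the finite measure `f μ`, to which the strict triangle
inequality of a strictly convex space applies. -/
theorem norm_integral_smul_lt_integral {f : α → ℝ} {v : α → E} (hf : Integrable f μ)
    (hf0 : 0 ≤ f) (hne : ¬ f =ᵐ[μ] 0) (hv : ∀ x, ‖v x‖ ≤ 1)
    (hv_fiber : ∀ c, μ (v ⁻¹' {c}) = 0) :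
    ‖∫ x, f x • v x ∂μ‖ < ∫ x, f x ∂μ := by
  set ν := μ.withDensity fun x => ENNReal.ofReal (f x)
  have hdens : AEMeasurable (fun x => ENNReal.ofReal (f x)) μ := hf.aemeasurable.ennreal_ofReal
  have : IsFiniteMeasure ν := isFiniteMeasure_withDensity_ofReal hf.2
  have hint : ∫ x, v x ∂ν = ∫ x, f x • v x ∂μ := by
    rw [integral_withDensity_eq_integral_toReal_smul₀ hdens
      (ae_of_all _ fun _ => ENNReal.ofReal_lt_top)]
    simp_rw [ENNReal.toReal_ofReal (hf0 _)]
  have hmass : ν.real univ = ∫ x, f x ∂μ := by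
    rw [measureReal_def, withDensity_apply _ MeasurableSet.univ, Measure.restrict_univ,
      ← ofReal_integral_eq_lintegral_ofReal hf (ae_of_all _ hf0),
      ENNReal.toReal_ofReal (integral_nonneg hf0)]
  rcases ae_eq_const_or_norm_integral_lt_of_norm_le_const (μ := ν) (C := 1) (ae_of_all _ hv)
    with hconst | hlt
  · refine absurd ?_ hne
    filter_upwards [(ae_withDensity_iff' hdens).1 hconst,
      measure_eq_zero_iff_ae_notMem.1 (hv_fiber (⨍ x, v x ∂ν))] with x hx hfiber
    by_contra hfx
    exact hfiber (hx (ENNReal.ofReal_pos.2 ((hf0 x).lt_of_ne' hfx)).ne')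
  · rwa [hint, hmass, mul_one] at hlt

end StrictTriangle

theorem MeasureTheory.Integrable.of_one_add_norm_mul {E : Type*} [NormedAddCommGroup E]
    [MeasurableSpace E] [OpensMeasurableSpace E] {μ : Measure E} {f : E → ℝ}
    (hf : Integrable (fun x => (1 + ‖x‖) * f x) μ) : Integrable f μ := by
  refine (hf.bdd_mul (c := 1) (f := fun x => (1 + ‖x‖)⁻¹) (by fun_prop)
    (ae_of_all _ fun x => ?_)).congr (ae_of_all _ fun x => ?_)
  · rw [norm_inv, Real.norm_of_nonneg (by positivity)]
    exact inv_le_one_of_one_le₀ (le_add_of_nonneg_right (norm_nonneg x))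
  · dsimp only
    field_simp

lemma q0_pos (q : E3) : 0 < q0 q := Real.sqrt_pos.2 (by positivity)

lemma one_le_q0 (q : E3) : 1 ≤ q0 q :=
  Real.one_le_sqrt.2 (le_add_of_nonneg_right (by positivity))

lemma q0_sq (q : E3) : q0 q ^ 2 = 1 + ‖q‖ ^ 2 := Real.sq_sqrt (by positivity)

@[fun_prop] lemma continuous_q0 : Continuous q0 := by
  unfold q0
  fun_prop

lemma integrable_div_q0 {f : E3 → ℝ} (hf : Integrable f) : Integrable fun q => f q / q0 q := by
  refine (hf.mul_bdd (c := 1) (continuous_q0.inv₀ fun q => (q0_pos q).ne').aestronglyMeasurable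
    (ae_of_all _ fun q => ?_)).congr (ae_of_all _ fun q => (div_eq_mul_inv _ _).symm)
  rw [Pi.inv_apply, norm_inv, Real.norm_of_nonneg (q0_pos q).le]
  exact inv_le_one_of_one_le₀ (one_le_q0 q)

noncomputable def unitLift (q : E3) : EuclideanSpace ℝ (Fin 4) :=
  WithLp.toLp 2 (Fin.cons (q0 q)⁻¹ fun i => q i / q0 q)

@[simp] lemma unitLift_zero (q : E3) : unitLift q 0 = (q0 q)⁻¹ := rfl

@[simp] lemma unitLift_succ (q : E3) (i : Fin 3) : unitLift q i.succ = q i / q0 q := rfl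

lemma norm_unitLift (q : E3) : ‖unitLift q‖ = 1 := by
  have := q0_pos q
  rw [← pow_eq_one_iff_of_nonneg (norm_nonneg _) two_ne_zero, EuclideanSpace.real_norm_sq_eq,
    Fin.sum_univ_succ]
  simp only [unitLift_zero, unitLift_succ, div_pow, ← Finset.sum_div,
    ← EuclideanSpace.real_norm_sq_eq, inv_pow, q0_sq]
  field_simp

lemma unitLift_injective : Function.Injective unitLift :=
  Function.LeftInverse.injective (g := fun w => WithLp.toLp 2 fun i => w i.succ / w 0)
    fun q => by ext i; simp [(q0_pos q).ne']

lemma continuous_unitLift : Continuous unitLift := by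
  unfold unitLift
  fun_prop (disch := exact fun q => (q0_pos q).ne')

lemma norm_integral_smul_unitLift_sq {f : E3 → ℝ} (hf : Integrable f) :
    ‖∫ q, f q • unitLift q‖ ^ 2 =
      (∫ q, f q / q0 q) ^ 2 + ∑ i : Fin 3, (∫ q, q i * f q / q0 q) ^ 2 := by
  have hF : Integrable fun q => f q • unitLift q :=
    hf.smul_bdd 1 continuous_unitLift.aestronglyMeasurable
      (ae_of_all _ fun q => (norm_unitLift q).le)
  have hcoord : ∀ j, (∫ q, f q • unitLift q) j = ∫ q, f q * unitLift q j := fun j =>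
    ((EuclideanSpace.proj j).integral_comp_comm hF).symm
  rw [EuclideanSpace.real_norm_sq_eq, Fin.sum_univ_succ]
  simp only [hcoord, unitLift_zero, unitLift_succ, mul_comm (f _), inv_mul_eq_div,
    div_mul_eq_mul_div]

theorem proper_density_positive_general (f : E3 → ℝ)
    (hnonneg : ∀ q, 0 ≤ f q)
    (hne : ¬ f =ᵐ[(volume : Measure E3)] 0)
    (hint : Integrable (fun q => (1 + ‖q‖) * f q)) :
    (∫ q : E3, f q / q0 q) ^ 2 + (∑ i : Fin 3, (∫ q : E3, q i * f q / q0 q) ^ 2)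
        < (∫ q : E3, f q) ^ 2 ∧
      0 < Real.sqrt ((∫ q : E3, f q) ^ 2 - ∑ i : Fin 3, (∫ q : E3, q i * f q / q0 q) ^ 2) ∧
      0 < (∫ q : E3, f q / q0 q) /
          Real.sqrt ((∫ q : E3, f q) ^ 2 - ∑ i : Fin 3, (∫ q : E3, q i * f q / q0 q) ^ 2) ∧
      (∫ q : E3, f q / q0 q) /
          Real.sqrt ((∫ q : E3, f q) ^ 2 - ∑ i : Fin 3, (∫ q : E3, q i * f q / q0 q) ^ 2)
        < 1 := by
  have hf : Integrable f := hint.of_one_add_norm_mul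
  have hlt : (∫ q : E3, f q / q0 q) ^ 2 + (∑ i : Fin 3, (∫ q : E3, q i * f q / q0 q) ^ 2)
      < (∫ q : E3, f q) ^ 2 := by
    rw [← norm_integral_smul_unitLift_sq hf]
    refine pow_lt_pow_left₀ (norm_integral_smul_lt_integral hf hnonneg hne
      (fun q => (norm_unitLift q).le) fun c => ?_) (norm_nonneg _) two_ne_zero
    exact (subsingleton_singleton.preimage unitLift_injective).measure_zero _
  have hA : 0 < ∫ q : E3, f q / q0 q := by
    refine integral_pos_of_nonneg_of_not_ae_eq_zero
      (fun q => div_nonneg (hnonneg q) (q0_pos q).le) (integrable_div_q0 hf) fun h => hne ?_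
    filter_upwards [h] with q hq
    simpa [(q0_pos q).ne'] using hq
  have hS : 0 < Real.sqrt ((∫ q : E3, f q) ^ 2 - ∑ i : Fin 3, (∫ q : E3, q i * f q / q0 q) ^ 2) :=
    Real.sqrt_pos.2 (by nlinarith)
  exact ⟨hlt, hS, div_pos hA hS, (div_lt_one hS).2 ((Real.lt_sqrt hA.le).2 (by linarith))⟩

/-- for any measurable nonnegative `f`, not a.e. zero, with
`∫ (1+|q|) f < ∞`, one has
`(∫ f/q⁰)² + Σᵢ (∫ qⁱ f/q⁰)² < (∫ f)²`; in particular the proper particle density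
`n_f = √((∫ f)² − Σᵢ (∫ qⁱ f/q⁰)²)` is strictly positive and
`α_f = (1/n_f) ∫ f/q⁰` satisfies `0 < α_f < 1`. -/
theorem proper_density_positive (f : E3 → ℝ)
    (hmeas : Measurable f) (hnonneg : ∀ q, 0 ≤ f q)
    (hne : ¬ f =ᵐ[(volume : Measure E3)] 0)
    (hint : Integrable (fun q => (1 + ‖q‖) * f q)) :
    (∫ q : E3, f q / q0 q) ^ 2 + (∑ i : Fin 3, (∫ q : E3, q i * f q / q0 q) ^ 2)
        < (∫ q : E3, f q) ^ 2 ∧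
      0 < Real.sqrt ((∫ q : E3, f q) ^ 2 - ∑ i : Fin 3, (∫ q : E3, q i * f q / q0 q) ^ 2) ∧
      0 < (∫ q : E3, f q / q0 q) /
          Real.sqrt ((∫ q : E3, f q) ^ 2 - ∑ i : Fin 3, (∫ q : E3, q i * f q / q0 q) ^ 2) ∧
      (∫ q : E3, f q / q0 q) /
          Real.sqrt ((∫ q : E3, f q) ^ 2 - ∑ i : Fin 3, (∫ q : E3, q i * f q / q0 q) ^ 2)
        < 1 :=
  proper_density_positive_general f hnonneg hne hint
end

section
/- The function β ↦ K₁(β)/K₂(β) is strictly increasing on (0,∞); that is, its derivative satisfies (K₁/K₂)'(β) > 0 for every β > 0. -/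
open MeasureTheory Real
open scoped InnerProductSpace

open Set
open scoped Nat

/-!
Write `M n β = coshMoment n β = ∫₀^∞ coshⁿ r · exp (-β cosh r) dr`. Then `K₁ = M 1`,
`K₂ = 2 M 2 - M 0` and `∂_β M n = -M (n + 1)`, so the numerator of `(K₁/K₂)'` is
`2 (M 1 · M 3 - M 2 ²) + (M 0 · M 2 - M 1 ²)`. Both brackets are positive by the integral form
of Lagrange's identity: `M m · M (m + 2) - M (m + 1) ²` is half the double integral over `(0, ∞)²` of
`(cosh r - cosh s)² · coshᵐ r · coshᵐ s · exp (-β (cosh r + cosh s))`.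
-/

section Prod

variable {α γ : Type*} [MeasurableSpace α] [MeasurableSpace γ] {μ : Measure α}

theorem integral_prod_pos_of_pos_on_prod {ν : Measure γ} [SFinite ν] {F : α × γ → ℝ} (hF : 0 ≤ F)
    (hFi : Integrable F (μ.prod ν)) {s : Set α} {t : Set γ} (hs : μ s ≠ 0) (ht : ν t ≠ 0)
    (hst : ∀ x ∈ s, ∀ y ∈ t, 0 < F (x, y)) : 0 < ∫ p, F p ∂μ.prod ν := by
  rw [integral_pos_iff_support_of_nonneg hF hFi]
  calc (0 : ENNReal) < μ.prod ν (s ×ˢ t) := by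
        rw [Measure.prod_prod]; exact pos_iff_ne_zero.2 (mul_ne_zero hs ht)
    _ ≤ μ.prod ν (Function.support F) :=
        measure_mono fun p ⟨hp₁, hp₂⟩ => (hst p.1 hp₁ p.2 hp₂).ne'

variable {g w : α → ℝ}

theorem integrable_prod_sq_sub_mul_mul (h : ∀ k ≤ 2, Integrable (fun x => g x ^ k * w x) μ) :
    Integrable (fun p : α × α => (g p.1 - g p.2) ^ 2 * (w p.1 * w p.2)) (μ.prod μ) := by
  refine ((((h 2 le_rfl).mul_prod (h 0 zero_le_two)).sub
    (((h 1 one_le_two).mul_prod (h 1 one_le_two)).const_mul 2)).add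
    ((h 0 zero_le_two).mul_prod (h 2 le_rfl))).congr (ae_of_all _ fun p => ?_)
  simp only [Pi.add_apply, Pi.sub_apply]
  ring

theorem integral_prod_sq_sub_mul_mul [SFinite μ]
    (h : ∀ k ≤ 2, Integrable (fun x => g x ^ k * w x) μ) :
    ∫ p, (g p.1 - g p.2) ^ 2 * (w p.1 * w p.2) ∂μ.prod μ =
      2 * ((∫ x, g x ^ 0 * w x ∂μ) * (∫ x, g x ^ 2 * w x ∂μ) - (∫ x, g x ^ 1 * w x ∂μ) ^ 2) := by
  have h20 := (h 2 le_rfl).mul_prod (h 0 zero_le_two) (ν := μ)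
  have h11 := ((h 1 one_le_two).mul_prod (h 1 one_le_two) (ν := μ)).const_mul 2
  have h02 := (h 0 zero_le_two).mul_prod (h 2 le_rfl) (ν := μ)
  calc ∫ p, (g p.1 - g p.2) ^ 2 * (w p.1 * w p.2) ∂μ.prod μ
      = ∫ p, ((g p.1 ^ 2 * w p.1) * (g p.2 ^ 0 * w p.2)
          - 2 * ((g p.1 ^ 1 * w p.1) * (g p.2 ^ 1 * w p.2)))
          + (g p.1 ^ 0 * w p.1) * (g p.2 ^ 2 * w p.2) ∂μ.prod μ := by
        congr 1; funext p; ring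
    _ = _ := by
        have hprod (j k : ℕ) := integral_prod_mul (μ := μ) (ν := μ)
          (fun x => g x ^ j * w x) (fun x => g x ^ k * w x)
        rw [integral_add ?_ h02, integral_sub h20 h11, integral_const_mul, hprod, hprod, hprod]
        · ring
        · exact h20.sub h11

end Prod

theorem pow_mul_exp_neg_le {t c : ℝ} (ht : 0 ≤ t) (hc : 0 < c) (n : ℕ) :
    t ^ n * exp (-(2 * c) * t) ≤ n ! / c ^ n * exp (-c * t) := by
  have hfac := pow_div_factorial_le_exp (c * t) (mul_nonneg hc.le ht) n
  calc t ^ n * exp (-(2 * c) * t)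
      = (c * t) ^ n / n ! * (n ! / c ^ n * exp (-c * t)) * exp (-c * t) := by
        rw [show -(2 * c) * t = -c * t + -c * t by ring, exp_add]
        field_simp
        ring
    _ ≤ exp (c * t) * (n ! / c ^ n * exp (-c * t)) * exp (-c * t) := by gcongr
    _ = n ! / c ^ n * exp (-c * t) := by
        rw [mul_comm (exp _), mul_assoc, ← exp_add]; simp

noncomputable def coshMoment (n : ℕ) (β : ℝ) : ℝ :=
  ∫ r in Ioi 0, cosh r ^ n * exp (-β * cosh r)

theorem integrableOn_cosh_pow_mul_exp_neg (n : ℕ) {β : ℝ} (hβ : 0 < β) :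
    IntegrableOn (fun r => cosh r ^ n * exp (-β * cosh r)) (Ioi 0) := by
  have hc : 0 < β / 2 := half_pos hβ
  refine ((exp_neg_integrableOn_Ioi 0 hc).const_mul (n ! / (β / 2) ^ n)).mono' (by fun_prop) ?_
  filter_upwards [ae_restrict_mem measurableSet_Ioi] with r (hr : 0 < r)
  have hcosh : r ≤ cosh r := (self_le_sinh_iff.2 hr.le).trans (sinh_lt_cosh r).le
  rw [norm_of_nonneg (by positivity)]
  calc cosh r ^ n * exp (-β * cosh r) ≤ n ! / (β / 2) ^ n * exp (-(β / 2) * cosh r) := by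
        simpa only [mul_div_cancel₀ β two_ne_zero] using
          pow_mul_exp_neg_le (cosh_pos r).le hc n
    _ ≤ n ! / (β / 2) ^ n * exp (-(β / 2) * r) := by
        gcongr _ * ?_; exact exp_le_exp.2 (by nlinarith)

theorem coshMoment_pos (n : ℕ) {β : ℝ} (hβ : 0 < β) : 0 < coshMoment n β := by
  refine setIntegral_pos_iff_support_of_nonneg_ae (ae_of_all _ fun r => by positivity)
    (integrableOn_cosh_pow_mul_exp_neg n hβ) |>.2 ?_
  have hsupp : Function.support (fun r => cosh r ^ n * exp (-β * cosh r)) = univ :=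
    eq_univ_of_forall fun r => (by positivity : (0 : ℝ) < _).ne'
  rw [hsupp, univ_inter, volume_Ioi]
  exact ENNReal.zero_lt_top

theorem hasDerivAt_coshMoment (n : ℕ) {β : ℝ} (hβ : 0 < β) :
    HasDerivAt (coshMoment n) (-coshMoment (n + 1) β) β := by
  have hδ : 0 < β / 2 := half_pos hβ
  have hderiv := hasDerivAt_integral_of_dominated_loc_of_deriv_le (μ := volume.restrict (Ioi 0))
    (F := fun b r => cosh r ^ n * exp (-b * cosh r))
    (F' := fun b r => -(cosh r ^ (n + 1) * exp (-b * cosh r)))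
    (bound := fun r => cosh r ^ (n + 1) * exp (-(β / 2) * cosh r))
    (Metric.ball_mem_nhds β hδ) (.of_forall fun b => by fun_prop)
    (integrableOn_cosh_pow_mul_exp_neg n hβ) (by fun_prop) ?_
    (integrableOn_cosh_pow_mul_exp_neg (n + 1) hδ) ?_
  · have := hderiv.2
    rwa [integral_neg] at this
  · refine ae_of_all _ fun r b hb => ?_
    rw [Metric.mem_ball, dist_eq, abs_lt] at hb
    rw [norm_neg, norm_of_nonneg (by positivity)]
    gcongr
    nlinarith [one_le_cosh r]
  · refine ae_of_all _ fun r b _ => ?_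
    have := ((hasDerivAt_neg b).mul_const (cosh r)).exp.const_mul (cosh r ^ n)
    exact this.congr_deriv (by ring)

theorem Kb_one_eq : Kb 1 = coshMoment 1 := by
  ext β; simp [Kb, coshMoment]

theorem Kb_two_eq {β : ℝ} (hβ : 0 < β) : Kb 2 β = 2 * coshMoment 2 β - coshMoment 0 β := by
  have hcosh (r : ℝ) : cosh ((2 : ℕ) * r) = 2 * cosh r ^ 2 - cosh r ^ 0 := by
    push_cast; rw [cosh_two_mul, cosh_sq]; ring
  simp_rw [Kb, hcosh, sub_mul, mul_assoc]
  rw [integral_sub ((integrableOn_cosh_pow_mul_exp_neg 2 hβ).const_mul 2)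
    (integrableOn_cosh_pow_mul_exp_neg 0 hβ), integral_const_mul, coshMoment, coshMoment]

theorem Kb_two_pos {β : ℝ} (hβ : 0 < β) : 0 < Kb 2 β := by
  have hle : coshMoment 0 β ≤ coshMoment 2 β :=
    setIntegral_mono (integrableOn_cosh_pow_mul_exp_neg 0 hβ)
      (integrableOn_cosh_pow_mul_exp_neg 2 hβ) fun r => by
        gcongr; exacts [one_le_cosh r, zero_le_two]
  rw [Kb_two_eq hβ]
  linarith [coshMoment_pos 2 hβ]

theorem coshMoment_sq_lt_mul (m : ℕ) {β : ℝ} (hβ : 0 < β) :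
    coshMoment (m + 1) β ^ 2 < coshMoment m β * coshMoment (m + 2) β := by
  have hshift (k : ℕ) : (fun r => cosh r ^ k * (cosh r ^ m * exp (-β * cosh r))) =
      fun r => cosh r ^ (m + k) * exp (-β * cosh r) := by
    ext r; ring
  have hint : ∀ k ≤ 2, Integrable (fun r => cosh r ^ k * (cosh r ^ m * exp (-β * cosh r)))
      (volume.restrict (Ioi 0)) := fun k _ => by
    rw [hshift]; exact integrableOn_cosh_pow_mul_exp_neg _ hβ
  have hid := integral_prod_sq_sub_mul_mul hint
  simp only [hshift] at hid
  change _ = 2 * (coshMoment m β * coshMoment (m + 2) β - coshMoment (m + 1) β ^ 2) at hid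
  suffices 0 < 2 * (coshMoment m β * coshMoment (m + 2) β - coshMoment (m + 1) β ^ 2) by linarith
  rw [← hid]
  refine integral_prod_pos_of_pos_on_prod (fun p => by positivity)
    (integrable_prod_sq_sub_mul_mul hint) (s := Ioo 0 1) (t := Ioi 1) ?_ ?_ fun x hx y hy => ?_
  · rw [Measure.restrict_apply measurableSet_Ioo, inter_eq_left.2 Ioo_subset_Ioi_self]
    simp
  · rw [Measure.restrict_apply measurableSet_Ioi, inter_eq_left.2 (Ioi_subset_Ioi zero_le_one)]
    simp
  · have hlt : cosh x < cosh y := by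
      rw [cosh_lt_cosh, abs_of_pos hx.1, abs_of_pos (zero_lt_one.trans hy)]
      exact hx.2.trans hy
    have := sub_ne_zero.2 hlt.ne
    positivity

theorem hasDerivAt_Kb_two {β : ℝ} (hβ : 0 < β) :
    HasDerivAt (Kb 2) (coshMoment 1 β - 2 * coshMoment 3 β) β := by
  have hK2 : (fun b => 2 * coshMoment 2 b - coshMoment 0 b) =ᶠ[nhds β] Kb 2 :=
    Filter.eventually_of_mem (Ioi_mem_nhds hβ) fun b hb => (Kb_two_eq hb).symm
  refine ((((hasDerivAt_coshMoment 2 hβ).const_mul 2).sub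
    (hasDerivAt_coshMoment 0 hβ)).congr_of_eventuallyEq hK2.symm).congr_deriv ?_
  ring

theorem hasDerivAt_Kb_one_div_Kb_two {β : ℝ} (hβ : 0 < β) :
    HasDerivAt (fun b => Kb 1 b / Kb 2 b)
      ((2 * (coshMoment 1 β * coshMoment 3 β - coshMoment 2 β ^ 2) +
        (coshMoment 0 β * coshMoment 2 β - coshMoment 1 β ^ 2)) / Kb 2 β ^ 2) β := by
  have hK1 : HasDerivAt (Kb 1) (-coshMoment 2 β) β := Kb_one_eq ▸ hasDerivAt_coshMoment 1 hβ
  refine (hK1.div (hasDerivAt_Kb_two hβ) (Kb_two_pos hβ).ne').congr_deriv ?_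
  rw [Kb_one_eq, Kb_two_eq hβ]
  ring

/-- `β ↦ K₁(β)/K₂(β)` is strictly increasing on `(0,∞)`;
that is, its derivative is positive for every `β > 0`. -/
theorem K1_div_K2_strictMono :
    StrictMonoOn (fun β => Kb 1 β / Kb 2 β) (Set.Ioi (0 : ℝ)) ∧
      ∀ β : ℝ, 0 < β → 0 < deriv (fun β => Kb 1 β / Kb 2 β) β := by
  have hderiv_pos (β : ℝ) (hβ : 0 < β) : 0 < deriv (fun β => Kb 1 β / Kb 2 β) β := by
    rw [(hasDerivAt_Kb_one_div_Kb_two hβ).deriv]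
    have h₀ := coshMoment_sq_lt_mul 0 hβ
    have h₁ := coshMoment_sq_lt_mul 1 hβ
    exact div_pos (by linarith) (pow_pos (Kb_two_pos hβ) 2)
  refine ⟨strictMonoOn_of_deriv_pos (convex_Ioi 0) (fun β hβ => ?_) ?_, hderiv_pos⟩
  · exact (hasDerivAt_Kb_one_div_Kb_two hβ).continuousAt.continuousWithinAt
  · rw [interior_Ioi]; exact hderiv_pos
end

section
/- For every β > 0 one has the lower bound K₀(β) + K₁(β) ≥ e^{−β} · √(2π/β) · (1 + 1/(8β) − 3/(32β²)). -/
open MeasureTheory Real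
open scoped InnerProductSpace

/-!
The substitution `t = sinh (r / 2)` gives `cosh r = 1 + 2 t²` and `dr = 2 dt / √(1 + t²)`, so
`K₀(β) + K₁(β) = ∫₀^∞ (1 + cosh r) e^{-β cosh r} dr = 4 e^{-β} ∫₀^∞ √(1 + t²) e^{-2β t²} dt`.
Bounding `√(1 + t²)` below by its Taylor polynomial `1 + t²/2 - t⁴/8` and evaluating the
Gaussian moments yields the bound, even with `3 / (128 β²)` in place of `3 / (32 β²)`.
-/

open Set

theorem cosh_eq_one_add_two_mul_sinh_half_sq (x : ℝ) : cosh x = 1 + 2 * sinh (x / 2) ^ 2 := by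
  have h := cosh_two_mul (x / 2)
  rw [mul_div_cancel₀ x two_ne_zero] at h
  rw [h, cosh_sq]
  ring

theorem one_add_sq_div_two_le_cosh (x : ℝ) : 1 + x ^ 2 / 2 ≤ cosh x := by
  rw [← cosh_abs, ← sq_abs, cosh_eq_one_add_two_mul_sinh_half_sq]
  have h : |x| / 2 ≤ sinh (|x| / 2) := self_le_sinh_iff.mpr (by positivity)
  nlinarith [abs_nonneg x]

theorem integrable_exp_neg_mul_sq_add_mul {b : ℝ} (hb : 0 < b) (c : ℝ) :
    Integrable fun x : ℝ => exp (-b * x ^ 2 + c * x) := by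
  have h : ∀ x : ℝ, -b * x ^ 2 + c * x = c ^ 2 / (4 * b) + -b * (x - c / (2 * b)) ^ 2 := by
    intro x; field_simp; ring
  simp_rw [h, exp_add]
  exact ((integrable_exp_neg_mul_sq hb).comp_sub_right _).const_mul _

theorem integrable_exp_mul_mul_exp_neg_mul_cosh {β : ℝ} (hβ : 0 < β) (c : ℝ) :
    Integrable fun r : ℝ => exp (c * r) * exp (-β * cosh r) := by
  refine ((integrable_exp_neg_mul_sq_add_mul (half_pos hβ) c).const_mul (exp (-β))).mono'
    (by fun_prop) (ae_of_all _ fun r => ?_)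
  rw [norm_of_nonneg (by positivity), ← exp_add, ← exp_add, exp_le_exp]
  nlinarith [one_add_sq_div_two_le_cosh r]

theorem integrable_cosh_mul_mul_exp_neg_mul_cosh {β : ℝ} (hβ : 0 < β) (a : ℝ) :
    Integrable fun r : ℝ => cosh (a * r) * exp (-β * cosh r) := by
  have h := ((integrable_exp_mul_mul_exp_neg_mul_cosh hβ a).add
    (integrable_exp_mul_mul_exp_neg_mul_cosh hβ (-a))).div_const 2
  refine h.congr (ae_of_all _ fun r => ?_)
  simp only [Pi.add_apply, cosh_eq (a * r), neg_mul]
  ring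

theorem Kb_zero_add_Kb_one {β : ℝ} (hβ : 0 < β) :
    Kb 0 β + Kb 1 β = ∫ r in Ioi 0, (1 + cosh r) * exp (-β * cosh r) := by
  simp only [Kb, Nat.cast_zero, Nat.cast_one, zero_mul, cosh_zero, one_mul, add_mul]
  refine (integral_add ?_ ?_).symm
  · simpa using (integrable_cosh_mul_mul_exp_neg_mul_cosh hβ 0).restrict
  · simpa using (integrable_cosh_mul_mul_exp_neg_mul_cosh hβ 1).restrict

theorem image_sinh_half_Ioi : (fun r => sinh (r / 2)) '' Ioi 0 = Ioi 0 := by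
  ext t
  constructor
  · rintro ⟨r, hr, rfl⟩
    exact sinh_pos_iff.mpr (half_pos hr)
  · intro ht
    refine ⟨2 * arsinh t, by simpa using arsinh_pos_iff.mpr ht, ?_⟩
    simp [sinh_arsinh]

theorem integral_Ioi_eq_integral_Ioi_sinh_half (g : ℝ → ℝ) :
    ∫ t in Ioi 0, g t = ∫ r in Ioi 0, cosh (r / 2) / 2 * g (sinh (r / 2)) := by
  have hderiv : ∀ r ∈ Ioi (0 : ℝ),
      HasDerivWithinAt (fun r => sinh (r / 2)) (cosh (r / 2) / 2) (Ioi 0) r := fun r _ =>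
    (((hasDerivAt_id' r).div_const 2).sinh.congr_deriv (by ring)).hasDerivWithinAt
  have hinj : InjOn (fun r : ℝ => sinh (r / 2)) (Ioi 0) :=
    (sinh_strictMono.comp (strictMono_id.div_const two_pos)).injective.injOn
  conv_lhs => rw [← image_sinh_half_Ioi]
  rw [integral_image_eq_integral_abs_deriv_smul measurableSet_Ioi hderiv hinj]
  simp only [abs_of_pos (half_pos (cosh_pos _)), smul_eq_mul]

theorem integrable_pow_mul_exp_neg_mul_sq {b : ℝ} (hb : 0 < b) (n : ℕ) :
    Integrable fun t : ℝ => t ^ n * exp (-b * t ^ 2) := by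
  simpa using integrable_rpow_mul_exp_neg_mul_sq hb (s := n) (by linarith [n.cast_nonneg (α := ℝ)])

theorem integral_Ioi_pow_mul_exp_neg_mul_sq {b : ℝ} (hb : 0 < b) (n : ℕ) :
    ∫ t in Ioi 0, t ^ n * exp (-b * t ^ 2) = b ^ (-(n + 1 : ℝ) / 2) * Gamma ((n + 1) / 2) / 2 := by
  have h := integral_rpow_mul_exp_neg_mul_rpow two_pos (q := n)
    (by linarith [n.cast_nonneg (α := ℝ)]) hb
  simp only [rpow_natCast, rpow_two] at h
  rw [h]
  ring

theorem integral_Ioi_pow_add_two_mul_exp_neg_mul_sq {b : ℝ} (hb : 0 < b) (n : ℕ) :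
    ∫ t in Ioi 0, t ^ (n + 2) * exp (-b * t ^ 2) =
      (n + 1) / (2 * b) * ∫ t in Ioi 0, t ^ n * exp (-b * t ^ 2) := by
  rw [integral_Ioi_pow_mul_exp_neg_mul_sq hb, integral_Ioi_pow_mul_exp_neg_mul_sq hb]
  have hGamma : Gamma ((((n + 2 : ℕ) : ℝ) + 1) / 2) = (n + 1) / 2 * Gamma ((n + 1) / 2) := by
    rw [← Gamma_add_one (by positivity)]
    push_cast
    ring_nf
  have hpow : b ^ (-((n + 2 : ℕ) + 1 : ℝ) / 2) = b ^ (-(n + 1 : ℝ) / 2) * b⁻¹ := by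
    rw [← rpow_neg_one, ← rpow_add hb]
    push_cast
    ring_nf
  rw [hGamma, hpow]
  field_simp

noncomputable def sqrtTaylor (t : ℝ) : ℝ := 1 + t ^ 2 / 2 - t ^ 4 / 8

theorem sqrtTaylor_le_sqrt (t : ℝ) : sqrtTaylor t ≤ √(1 + t ^ 2) := by
  rcases le_or_gt (sqrtTaylor t) 0 with h | h
  · exact h.trans (sqrt_nonneg _)
  · rw [← sqrt_sq h.le]
    apply sqrt_le_sqrt
    unfold sqrtTaylor at h ⊢
    nlinarith [sq_nonneg t, sq_nonneg (t ^ 3), sq_nonneg (t ^ 2 - 2)]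

theorem sqrtTaylor_mul_eq (t x : ℝ) :
    sqrtTaylor t * x = t ^ 0 * x + 1 / 2 * (t ^ 2 * x) - 1 / 8 * (t ^ 4 * x) := by
  unfold sqrtTaylor
  ring

theorem integrable_sqrtTaylor_mul_exp_neg_mul_sq {b : ℝ} (hb : 0 < b) :
    Integrable fun t => sqrtTaylor t * exp (-b * t ^ 2) := by
  simp only [sqrtTaylor_mul_eq]
  exact ((integrable_pow_mul_exp_neg_mul_sq hb 0).add
    ((integrable_pow_mul_exp_neg_mul_sq hb 2).const_mul _)).sub
    ((integrable_pow_mul_exp_neg_mul_sq hb 4).const_mul _)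

theorem integral_Ioi_sqrtTaylor_mul_exp_neg_mul_sq {b : ℝ} (hb : 0 < b) :
    ∫ t in Ioi 0, sqrtTaylor t * exp (-b * t ^ 2) =
      √(π / b) / 2 * (1 + 1 / (4 * b) - 3 / (32 * b ^ 2)) := by
  have hm : ∀ n, IntegrableOn (fun t : ℝ => t ^ n * exp (-b * t ^ 2)) (Ioi 0) := fun n =>
    (integrable_pow_mul_exp_neg_mul_sq hb n).integrableOn
  have hm4 : ∫ t in Ioi 0, t ^ 4 * exp (-b * t ^ 2) =
      3 / (2 * b) * ∫ t in Ioi 0, t ^ 2 * exp (-b * t ^ 2) := by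
    convert integral_Ioi_pow_add_two_mul_exp_neg_mul_sq hb 2 using 2
    norm_num
  have hm2 : ∫ t in Ioi 0, t ^ 2 * exp (-b * t ^ 2) =
      1 / (2 * b) * ∫ t in Ioi 0, t ^ 0 * exp (-b * t ^ 2) := by
    convert integral_Ioi_pow_add_two_mul_exp_neg_mul_sq hb 0 using 2
    norm_num
  have hm02 : IntegrableOn
      (fun t : ℝ => t ^ 0 * exp (-b * t ^ 2) + 1 / 2 * (t ^ 2 * exp (-b * t ^ 2))) (Ioi 0) :=
    (hm 0).add ((hm 2).const_mul _)
  have hm0 : ∫ t in Ioi 0, t ^ 0 * exp (-b * t ^ 2) = √(π / b) / 2 := by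
    simpa using integral_gaussian_Ioi b
  simp only [sqrtTaylor_mul_eq]
  rw [integral_sub hm02 ((hm 4).const_mul _),
    integral_add (hm 0) ((hm 2).const_mul _), integral_const_mul, integral_const_mul, hm4, hm2, hm0]
  field_simp
  ring

theorem integrable_sqrt_one_add_sq_mul_exp_neg_mul_sq {b : ℝ} (hb : 0 < b) :
    Integrable fun t => √(1 + t ^ 2) * exp (-b * t ^ 2) := by
  refine ((integrable_pow_mul_exp_neg_mul_sq hb 0).add
    (integrable_pow_mul_exp_neg_mul_sq hb 2)).mono' (by fun_prop) (ae_of_all _ fun t => ?_)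
  simp only [norm_of_nonneg (by positivity : 0 ≤ √(1 + t ^ 2) * exp (-b * t ^ 2)), Pi.add_apply,
    pow_zero, one_mul]
  rw [← one_add_mul]
  gcongr
  exact sqrt_le_self_iff.mpr (Or.inr (by nlinarith [sq_nonneg t]))

theorem Kb_zero_add_Kb_one_eq_integral_sqrt {β : ℝ} (hβ : 0 < β) :
    Kb 0 β + Kb 1 β = 4 * exp (-β) * ∫ t in Ioi 0, √(1 + t ^ 2) * exp (-(2 * β) * t ^ 2) := by
  rw [Kb_zero_add_Kb_one hβ, ← integral_const_mul, eq_comm, integral_Ioi_eq_integral_Ioi_sinh_half]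
  refine setIntegral_congr_fun measurableSet_Ioi fun r _ => ?_
  have hsqrt : √(1 + sinh (r / 2) ^ 2) = cosh (r / 2) := by
    rw [← cosh_sq', sqrt_sq (cosh_pos _).le]
  have hcosh := cosh_eq_one_add_two_mul_sinh_half_sq r
  have hexp : exp (-β * cosh r) = exp (-β) * exp (-(2 * β) * sinh (r / 2) ^ 2) := by
    rw [← exp_add, hcosh]
    ring_nf
  rw [hsqrt, hexp, hcosh]
  linear_combination 2 * exp (-β) * exp (-(2 * β) * sinh (r / 2) ^ 2) * cosh_sq' (r / 2)

/-- lower bound `K₀(β) + K₁(β) ≥ e^{−β} √(2π/β) (1 + 1/(8β) − 3/(32β²))`. -/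
theorem bessel_K0_add_K1_lower_bound (β : ℝ) (hβ : 0 < β) :
    Real.exp (-β) * Real.sqrt (2 * Real.pi / β) *
      (1 + 1 / (8 * β) - 3 / (32 * β ^ 2)) ≤ Kb 0 β + Kb 1 β := by
  have h2β : 0 < 2 * β := by positivity
  have hsqrt : √(2 * π / β) = 2 * √(π / (2 * β)) := by
    rw [show 2 * π / β = 2 ^ 2 * (π / (2 * β)) by field_simp, sqrt_mul (by positivity),
      sqrt_sq zero_le_two]
  calc exp (-β) * √(2 * π / β) * (1 + 1 / (8 * β) - 3 / (32 * β ^ 2))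
      ≤ 4 * exp (-β) * (√(π / (2 * β)) / 2 *
          (1 + 1 / (8 * β) - 3 / (32 * (2 * β) ^ 2))) := by
        rw [hsqrt, show ∀ s B : ℝ, 4 * exp (-β) * (s / 2 * B) = exp (-β) * (2 * s) * B by
          intros; ring]
        gcongr
        all_goals linarith
    _ = 4 * exp (-β) * ∫ t in Ioi 0, sqrtTaylor t * exp (-(2 * β) * t ^ 2) := by
        rw [integral_Ioi_sqrtTaylor_mul_exp_neg_mul_sq h2β]
        ring
    _ ≤ 4 * exp (-β) * ∫ t in Ioi 0, √(1 + t ^ 2) * exp (-(2 * β) * t ^ 2) := by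
        refine mul_le_mul_of_nonneg_left ?_ (by positivity)
        exact setIntegral_mono (integrable_sqrtTaylor_mul_exp_neg_mul_sq h2β).integrableOn
          (integrable_sqrt_one_add_sq_mul_exp_neg_mul_sq h2β).integrableOn
          fun t => mul_le_mul_of_nonneg_right (sqrtTaylor_le_sqrt t) (exp_pos _).le
    _ = Kb 0 β + Kb 1 β := (Kb_zero_add_Kb_one_eq_integral_sqrt hβ).symm
end

section
/- For every β ≥ 2 one has K₁(β)/K₀(β) ≥ (128β² + 48β − 33)/(128β² − 16β + 9). -/
open MeasureTheory Real
open scoped InnerProductSpace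

/-!
Integrate by parts against `exp (-β cosh r)`. With `w x = 4βx - 12β - 4` (`besselWeight`), the
function `F r = sinh r · w (cosh r) · exp (-β cosh r)` vanishes at `0` and at `∞`, and
`F' r = (P cosh r - C - R (cosh r)) exp (-β cosh r)`, where `P = 16β² + 12β + 5`,
`C = 16β² + 20β + 9` and `R x = (2βx - 2β - 3)² (x - 1)` (`besselRemainder`) is nonnegative for
`x ≥ 1`. Integrating `F'` over `(0, ∞)` therefore gives `C K₀ ≤ P K₁`, and `C / P` dominates the
stated bound: the difference of the cross products is `288β² + 192β + 246`. All integrals converge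
because a function of polynomial growth in `cosh r` times `exp (-β cosh r)` is `O(exp (-β r / 4))`.
-/

open Set Filter Asymptotics Topology

lemma half_le_cosh (r : ℝ) : r / 2 ≤ cosh r := by
  rw [cosh_eq]
  linarith [add_one_le_exp r, exp_pos (-r)]

lemma tendsto_cosh_atTop : Tendsto cosh atTop atTop :=
  tendsto_atTop_mono half_le_cosh (tendsto_id.atTop_div_const two_pos)

section PolynomialGrowth

variable {p : ℝ → ℝ} {n : ℕ} {β : ℝ}

lemma isBigO_mul_exp_neg (hp : p =O[atTop] (· ^ n)) (hβ : 0 < β) :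
    (fun x ↦ p x * exp (-β * x)) =O[atTop] fun x ↦ exp (-(β / 2) * x) := by
  have hexp := (hp.trans (isLittleO_pow_exp_pos_mul_atTop n (half_pos hβ)).isBigO).mul
    (isBigO_refl (fun x ↦ exp (-β * x)) atTop)
  refine hexp.congr_right fun x ↦ ?_
  rw [← exp_add]
  ring_nf

lemma tendsto_mul_exp_neg_atTop (hp : p =O[atTop] (· ^ n)) (hβ : 0 < β) :
    Tendsto (fun x ↦ p x * exp (-β * x)) atTop (𝓝 0) :=
  (isBigO_mul_exp_neg hp hβ).trans_tendsto <|
    tendsto_exp_atBot.comp <| tendsto_id.const_mul_atTop_of_neg (by linarith)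

lemma integrableOn_comp_cosh_mul_exp_neg (hp_cont : Continuous p) (hp : p =O[atTop] (· ^ n))
    (hβ : 0 < β) (a : ℝ) :
    IntegrableOn (fun r ↦ p (cosh r) * exp (-β * cosh r)) (Ioi a) := by
  refine integrable_of_isBigO_exp_neg (b := β / 4) (by linarith) (by fun_prop) ?_
  refine ((isBigO_mul_exp_neg hp hβ).comp_tendsto tendsto_cosh_atTop).trans <|
    IsBigO.of_bound 1 (Eventually.of_forall fun r ↦ ?_)
  simp only [Function.comp_apply, norm_eq_abs, abs_of_pos (exp_pos _), one_mul]
  rw [exp_le_exp]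
  nlinarith [half_le_cosh r]

end PolynomialGrowth

lemma tendsto_sinh_mul_comp_cosh_mul_exp_neg {q : ℝ → ℝ} {n : ℕ} {β : ℝ}
    (hq : (fun x ↦ x * q x) =O[atTop] (· ^ n)) (hβ : 0 < β) :
    Tendsto (fun r ↦ sinh r * q (cosh r) * exp (-β * cosh r)) atTop (𝓝 0) := by
  refine squeeze_zero_norm (fun r ↦ ?_)
    (by simpa only [norm_zero] using
      ((tendsto_mul_exp_neg_atTop hq hβ).comp tendsto_cosh_atTop).norm)
  have hsinh : |sinh r| ≤ cosh r := by
    rw [abs_sinh, ← cosh_abs r]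
    exact (sinh_lt_cosh _).le
  simp only [Function.comp_apply, norm_mul, norm_eq_abs, abs_of_pos (cosh_pos r)]
  gcongr

lemma Kb_zero_eq (β : ℝ) : Kb 0 β = ∫ r in Ioi 0, exp (-β * cosh r) := by
  simp [Kb]

lemma Kb_one_eq_s8 (β : ℝ) : Kb 1 β = ∫ r in Ioi 0, cosh r * exp (-β * cosh r) := by
  simp [Kb]

lemma integrableOn_exp_neg_mul_cosh {β : ℝ} (hβ : 0 < β) (a : ℝ) :
    IntegrableOn (fun r ↦ exp (-β * cosh r)) (Ioi a) := by
  simpa using integrableOn_comp_cosh_mul_exp_neg (p := fun _ ↦ 1) (n := 0) continuous_const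
    (by simpa using isBigO_refl (fun _ ↦ (1 : ℝ)) atTop) hβ a

lemma Kb_zero_pos {β : ℝ} (hβ : 0 < β) : 0 < Kb 0 β := by
  have : NeZero (volume (Ioi (0 : ℝ))) := ⟨by simp⟩
  rw [Kb_zero_eq]
  exact integral_exp_pos (integrableOn_exp_neg_mul_cosh hβ 0)

def besselWeight (β x : ℝ) : ℝ := 4 * β * x - (12 * β + 4)

def besselRemainder (β x : ℝ) : ℝ := (2 * β * x - (2 * β + 3)) ^ 2 * (x - 1)

lemma hasDerivAt_sinh_mul_besselWeight (β r : ℝ) :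
    HasDerivAt (fun r ↦ sinh r * besselWeight β (cosh r) * exp (-β * cosh r))
      ((16 * β ^ 2 + 12 * β + 5) * (cosh r * exp (-β * cosh r))
        - (16 * β ^ 2 + 20 * β + 9) * exp (-β * cosh r)
        - besselRemainder β (cosh r) * exp (-β * cosh r)) r := by
  refine (((hasDerivAt_sinh r).mul (((hasDerivAt_cosh r).const_mul (4 * β)).sub_const
    (12 * β + 4))).mul ((hasDerivAt_cosh r).const_mul (-β)).exp).congr_deriv ?_
  simp only [Pi.mul_apply, besselRemainder]
  linear_combination 4 * β * (2 + β * (3 - cosh r)) * exp (-β * cosh r) * sinh_sq r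

section Certificate

variable {β : ℝ}

lemma besselRemainder_nonneg {x : ℝ} (hx : 1 ≤ x) : 0 ≤ besselRemainder β x :=
  mul_nonneg (sq_nonneg _) (sub_nonneg.2 hx)

lemma isBigO_besselRemainder (hβ : 0 ≤ β) : besselRemainder β =O[atTop] (· ^ 3) := by
  refine IsBigO.of_bound ((4 * β + 3) ^ 2) ?_
  filter_upwards [eventually_ge_atTop 1] with x hx
  have hlin : (2 * β * x - (2 * β + 3)) ^ 2 ≤ ((4 * β + 3) * x) ^ 2 := by
    apply sq_le_sq' <;> nlinarith
  rw [norm_eq_abs, norm_eq_abs, abs_of_nonneg (besselRemainder_nonneg hx),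
    abs_of_nonneg (by positivity), besselRemainder]
  nlinarith [sq_nonneg (2 * β * x - (2 * β + 3))]

lemma isBigO_mul_besselWeight (hβ : 0 ≤ β) :
    (fun x ↦ x * besselWeight β x) =O[atTop] (· ^ 2) := by
  refine IsBigO.of_bound (16 * β + 4) ?_
  filter_upwards [eventually_ge_atTop 1] with x hx
  have hweight : |besselWeight β x| ≤ (16 * β + 4) * x :=
    abs_le.2 ⟨by rw [besselWeight]; nlinarith, by rw [besselWeight]; nlinarith⟩
  rw [norm_eq_abs, norm_eq_abs, abs_mul, abs_of_nonneg (by positivity : (0 : ℝ) ≤ x ^ 2),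
    abs_of_nonneg (by linarith : (0 : ℝ) ≤ x)]
  nlinarith

theorem Kb_zero_mul_le_Kb_one_mul (hβ : 0 < β) :
    (16 * β ^ 2 + 20 * β + 9) * Kb 0 β ≤ (16 * β ^ 2 + 12 * β + 5) * Kb 1 β := by
  have hI0 := integrableOn_exp_neg_mul_cosh hβ 0
  have hI1 := integrableOn_comp_cosh_mul_exp_neg (p := fun x ↦ x) (n := 1) continuous_id
    (by simpa using isBigO_refl (fun x : ℝ ↦ x) atTop) hβ 0
  have hIR := integrableOn_comp_cosh_mul_exp_neg (by unfold besselRemainder; fun_prop)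
    (isBigO_besselRemainder hβ.le) hβ 0
  have hIP : IntegrableOn (fun r ↦ (16 * β ^ 2 + 12 * β + 5) * (cosh r * exp (-β * cosh r))
      - (16 * β ^ 2 + 20 * β + 9) * exp (-β * cosh r)) (Ioi 0) :=
    (hI1.const_mul _).sub (hI0.const_mul _)
  have hFTC := integral_Ioi_of_hasDerivAt_of_tendsto'
    (fun r _ ↦ hasDerivAt_sinh_mul_besselWeight β r) (hIP.sub hIR)
    (tendsto_sinh_mul_comp_cosh_mul_exp_neg (isBigO_mul_besselWeight hβ.le) hβ)
  rw [integral_sub hIP hIR, integral_sub (hI1.const_mul _) (hI0.const_mul _),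
    integral_const_mul, integral_const_mul, sinh_zero, zero_mul, zero_mul, sub_zero] at hFTC
  have hR : 0 ≤ ∫ r in Ioi 0, besselRemainder β (cosh r) * exp (-β * cosh r) :=
    setIntegral_nonneg measurableSet_Ioi fun r _ ↦
      mul_nonneg (besselRemainder_nonneg (one_le_cosh r)) (exp_pos _).le
  rw [Kb_zero_eq, Kb_one_eq_s8]
  linarith

end Certificate

/-- for every `β ≥ 2`, `K₁(β)/K₀(β) ≥ (128β² + 48β − 33)/(128β² − 16β + 9)`. -/
theorem bessel_K1_div_K0_lower_bound (β : ℝ) (hβ : 2 ≤ β) :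
    (128 * β ^ 2 + 48 * β - 33) / (128 * β ^ 2 - 16 * β + 9) ≤ Kb 1 β / Kb 0 β := by
  have hβ0 : 0 < β := by linarith
  have hP : 0 < 16 * β ^ 2 + 12 * β + 5 := by positivity
  calc (128 * β ^ 2 + 48 * β - 33) / (128 * β ^ 2 - 16 * β + 9)
      ≤ (16 * β ^ 2 + 20 * β + 9) / (16 * β ^ 2 + 12 * β + 5) := by
        rw [div_le_div_iff₀ (by nlinarith) hP]
        nlinarith
    _ ≤ Kb 1 β / Kb 0 β := by
        rw [div_le_div_iff₀ hP (Kb_zero_pos hβ0)]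
        linarith [Kb_zero_mul_le_Kb_one_mul hβ0]
end
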